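/- arXiv:2309.00074 — 9 statements merged into one kernel-verified Lean document; each statement's English description precedes it below -/
import Mathlib

section
/- Let p : ℝ → ℝ satisfy p(v) ≥ 0 for all v, let κ > 0, v_max > 0, A ≥ 0, T_H > 0, and set κ̄ = 1/T_H. Assume B = κ̄, κ̄ ≥ κ, and D_st ≥ D_sf. Then for every state (D, v, v_L) ∈ ℝ³ with v ≥ 0 lying on the time-headway boundary, i.e. (D − D_sf)/T_H − v = 0, the CCC controller with C = 0 satisfies Nagumo's condition: κ̄(v_L − v) + p(v) − [A(V(D) − v) + B(W(v_L) − v)] ≥ 0. (This is case (i) of Theorem 3: the CCC-controlled vehicle cannot leave the time-headway safe set at its boundary.) -/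
/-- Range policy of the CCC controller. -/
noncomputable def rangePolicy (κ Dst vmax D : ℝ) : ℝ := min (κ * (D - Dst)) vmax

/-- Speed policy of the CCC controller. -/
noncomputable def speedPolicy (vmax vL : ℝ) : ℝ := min vL vmax

/-- Theorem 3, case (i): with `B = κ̄ ≥ κ`, `D_st ≥ D_sf` and `v ≥ 0`, the CCC
controller (with `C = 0`) satisfies Nagumo's condition on the time-headway
boundary `(D − D_sf)/T_H − v = 0`. -/
theorem ccc_time_headway_safe_case_i
    (p : ℝ → ℝ) (hp : ∀ v, 0 ≤ p v)
    (κ vmax A B TH Dst Dsf κbar : ℝ)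
    (hκ : 0 < κ) (hvmax : 0 < vmax) (hA : 0 ≤ A) (hTH : 0 < TH)
    (hκbar : κbar = 1 / TH) (hB : B = κbar) (hκκbar : κ ≤ κbar)
    (hDstDsf : Dsf ≤ Dst)
    (D v vL : ℝ) (hv : 0 ≤ v)
    (hboundary : (D - Dsf) / TH - v = 0) :
    κbar * (vL - v) + p v -
      (A * (rangePolicy κ Dst vmax D - v) + B * (speedPolicy vmax vL - v)) ≥ 0 := by
  have hκbar' : 0 < κbar := by rw [hκbar]; positivity
  have hveq : v * TH = D - Dsf := by
    field_simp at hboundary; linarith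
  have hκTH : κbar * TH = 1 := by rw [hκbar]; field_simp
  have hDDsf : 0 ≤ D - Dsf := by nlinarith
  have hV : rangePolicy κ Dst vmax D ≤ v := by
    refine le_trans (min_le_left _ _) ?_
    rcases le_or_gt D Dst with h | h
    · nlinarith
    · have h1 : κ * (D - Dst) ≤ κbar * (D - Dst) := by nlinarith
      have h2 : κbar * (D - Dst) ≤ κbar * (D - Dsf) := by nlinarith
      have h3 : κbar * (D - Dsf) = v := by nlinarith
      linarith
  have hW : speedPolicy vmax vL ≤ vL := min_le_left _ _
  subst hB
  have := hp v
  nlinarith [mul_nonneg hA (sub_nonneg.mpr hV), mul_nonneg hκbar'.le (sub_nonneg.mpr hW)]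
end

section
/- Let p : ℝ → ℝ satisfy p(v) ≥ 0 for all v, let κ > 0, v_max > 0, A, B ≥ 0, T_H > 0, and set κ̄ = 1/T_H. Let v̄ ≥ 0 and assume κ̄ ≥ κ, D_st > D_sf, and A ≥ |κ̄ − B|·v̄ / (κ(D_st − D_sf)). Then for every state (D, v, v_L) ∈ ℝ³ with v ∈ [0, v̄] and v_L ∈ [0, v̄] lying on the time-headway boundary, i.e. (D − D_sf)/T_H − v = 0, the CCC controller with C = 0 satisfies Nagumo's condition: κ̄(v_L − v) + p(v) − [A(V(D) − v) + B(W(v_L) − v)] ≥ 0. (This is case (ii) of Theorem 3.) -/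
/-- Theorem 3, case (ii): with `κ̄ ≥ κ`, `D_st > D_sf`, speeds in `[0, v̄]` and
`A ≥ |κ̄ − B| v̄ / (κ (D_st − D_sf))`, the CCC controller (with `C = 0`) satisfies
Nagumo's condition on the time-headway boundary `(D − D_sf)/T_H − v = 0`. -/
theorem ccc_time_headway_safe_case_ii
    (p : ℝ → ℝ) (hp : ∀ v, 0 ≤ p v)
    (κ vmax A B TH Dst Dsf κbar vbar : ℝ)
    (hκ : 0 < κ) (hvmax : 0 < vmax) (hA : 0 ≤ A) (hB : 0 ≤ B) (hTH : 0 < TH)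
    (hκbar : κbar = 1 / TH) (hvbar : 0 ≤ vbar)
    (hκκbar : κ ≤ κbar) (hDstDsf : Dsf < Dst)
    (hgain : A ≥ |κbar - B| * vbar / (κ * (Dst - Dsf)))
    (D v vL : ℝ) (hv : v ∈ Set.Icc 0 vbar) (hvL : vL ∈ Set.Icc 0 vbar)
    (hboundary : (D - Dsf) / TH - v = 0) :
    κbar * (vL - v) + p v -
      (A * (rangePolicy κ Dst vmax D - v) + B * (speedPolicy vmax vL - v)) ≥ 0 := by
  obtain ⟨hv0, hvub⟩ := hv
  obtain ⟨hvL0, hvLub⟩ := hvL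
  have hκbarpos : 0 < κbar := by rw [hκbar]; positivity
  have hD : D = Dsf + v * TH := by
    field_simp at hboundary; linarith
  have h1 : rangePolicy κ Dst vmax D ≤ κ * (D - Dst) := min_le_left _ _
  have h2 : speedPolicy vmax vL ≤ vL := min_le_left _ _
  have hvv : κbar * (v * TH) = v := by rw [hκbar]; field_simp
  have hrange : κ * (D - Dst) - v ≤ -(κ * (Dst - Dsf)) := by
    have : κ * (v * TH) ≤ κbar * (v * TH) := by nlinarith
    nlinarith
  have habs : (κbar - B) * (vL - v) ≥ -(|κbar - B| * vbar) := by
    have h3 : |(κbar - B) * (vL - v)| ≤ |κbar - B| * vbar := by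
      rw [abs_mul]
      apply mul_le_mul_of_nonneg_left _ (abs_nonneg _)
      rw [abs_le]; constructor <;> linarith
    linarith [neg_abs_le ((κbar - B) * (vL - v))]
  have hpos : 0 < κ * (Dst - Dsf) := mul_pos hκ (by linarith)
  have hgain' : |κbar - B| * vbar ≤ A * (κ * (Dst - Dsf)) :=
    (div_le_iff₀ hpos).mp hgain
  have hp' := hp v
  nlinarith [mul_le_mul_of_nonneg_left (sub_le_sub_right h1 v) hA,
             mul_le_mul_of_nonneg_left (sub_le_sub_right h2 v) hB,
             mul_le_mul_of_nonneg_left hrange hA]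
end

section
/- Let p : ℝ → ℝ satisfy p(v) ≥ 0 for all v, let κ > 0, v_max > 0, A, B, C ≥ 0 with C ≤ 1, T_c > 0, and set κ̄ = 1/T_c. Let γ be of class-K, let v̄ ≥ 0, and assume κ̄ ≥ κ, D_st > D_sf, and the gain condition: for every w ∈ [0, v̄], A·κ(D_st − D_sf) + min{0, B − κ̄}·v̄ + (κ̄ − B + A)·w − (1 − C)·γ(w) ≥ 0. Then for every state (D, v, v_L) ∈ ℝ³ with v ∈ [0, v̄], v_L ∈ [0, v̄], D − D_sf ≥ 0, lying on the time-to-conflict boundary, i.e. (D − D_sf)/T_c + v_L − v = 0, and for every lead acceleration a_L with a_L ≥ −γ(v_L), the CCC controller satisfies Nagumo's condition: κ̄(v_L − v) + a_L + p(v) − [A(V(D) − v) + B(W(v_L) − v) + C·a_L] ≥ 0. (This is Theorem 4: the CCC-controlled vehicle cannot leave the set S_D ∩ S_TTC at the time-to-conflict boundary.) -/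
/-- A function `γ : [0,∞) → [0,∞)` (extended to `ℝ → ℝ`) is of class-K if it is
continuous, strictly increasing and `γ 0 = 0` on `[0,∞)`. -/
def ClassK (γ : ℝ → ℝ) : Prop :=
  ContinuousOn γ (Set.Ici 0) ∧ StrictMonoOn γ (Set.Ici 0) ∧ γ 0 = 0 ∧
    ∀ r ∈ Set.Ici (0 : ℝ), 0 ≤ γ r

/-- Theorem 4: under the stated gain condition, the CCC controller satisfies
Nagumo's condition on the time-to-conflict boundary
`(D − D_sf)/T_c + v_L − v = 0` within the distance-safe set `D − D_sf ≥ 0`,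
for lead accelerations `a_L ≥ −γ(v_L)`. -/
theorem ccc_distance_ttc_safe
    (p : ℝ → ℝ) (hp : ∀ v, 0 ≤ p v)
    (κ vmax A B C Tc Dst Dsf κbar vbar : ℝ) (γ : ℝ → ℝ)
    (hκ : 0 < κ) (hvmax : 0 < vmax)
    (hA : 0 ≤ A) (hB : 0 ≤ B) (hC : 0 ≤ C) (hC1 : C ≤ 1)
    (hTc : 0 < Tc) (hκbar : κbar = 1 / Tc)
    (hγ : ClassK γ) (hvbar : 0 ≤ vbar)
    (hκκbar : κ ≤ κbar) (hDstDsf : Dsf < Dst)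
    (hgain : ∀ w ∈ Set.Icc (0 : ℝ) vbar,
      A * κ * (Dst - Dsf) + min 0 (B - κbar) * vbar
        + (κbar - B + A) * w - (1 - C) * γ w ≥ 0)
    (D v vL aL : ℝ)
    (hv : v ∈ Set.Icc 0 vbar) (hvL : vL ∈ Set.Icc 0 vbar)
    (hD : D - Dsf ≥ 0)
    (hboundary : (D - Dsf) / Tc + vL - v = 0)
    (haL : aL ≥ -γ vL) :
    κbar * (vL - v) + aL + p v -
      (A * (rangePolicy κ Dst vmax D - v) + B * (speedPolicy vmax vL - v)
        + C * aL) ≥ 0 := by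
  have hγvL : 0 ≤ γ vL := hγ.2.2.2 vL hvL.1
  have hDeq : D - Dsf = Tc * (v - vL) := by
    field_simp at hboundary; linarith
  have hκT : κbar * Tc = 1 := by rw [hκbar]; field_simp
  have hw : 0 ≤ v - vL := by nlinarith
  have hκTc : κ * Tc ≤ 1 := by nlinarith
  have hVle : rangePolicy κ Dst vmax D ≤ κ * (D - Dst) := min_le_left _ _
  have hWle : speedPolicy vmax vL ≤ vL := min_le_left _ _
  have hmin1 : min 0 (B - κbar) * vbar ≤ (B - κbar) * v := by
    rcases le_or_gt 0 (B - κbar) with h | h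
    · have : min 0 (B - κbar) = 0 := min_eq_left h
      rw [this]; nlinarith [hv.1]
    · have : min 0 (B - κbar) = B - κbar := min_eq_right h.le
      rw [this]; nlinarith [hv.1, hv.2]
  have h1 := hgain vL hvL
  have hchain : κ * (D - Dst) ≤ (v - vL) - κ * (Dst - Dsf) := by nlinarith
  have hAκ : A * (κ * (D - Dst)) ≤ A * ((v - vL) - κ * (Dst - Dsf)) :=
    mul_le_mul_of_nonneg_left hchain hA
  nlinarith [hp v, hAκ,
    mul_nonneg (sub_nonneg.2 hC1) (by linarith : (0:ℝ) ≤ aL + γ vL),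
    mul_le_mul_of_nonneg_left hVle hA, mul_le_mul_of_nonneg_left hWle hB]
end

section
/- Let p : ℝ → ℝ satisfy p(v) ≥ 0 for all v, let κ > 0, v_max > 0, A, B, C ≥ 0 with C ≤ 1, T_c > 0, κ̄ = 1/T_c with κ̄ ≥ κ, let γ be of class-K, and let α_e : ℝ → ℝ satisfy α_e(0) = 0. Define k_s(D, v, v_L, a_L) = κ̄(v_L − v) + p(v) + α_e(κ̄(D − D_sf) + v_L − v) + a_L and k_d(D, v, v_L, a_L) = A(V(D) − v) + B(W(v_L) − v) + C·a_L. Then for every (D, v, v_L) ∈ ℝ³ with v_L ≥ 0, D − D_sf ≥ 0 and (D − D_sf)/T_c + v_L − v = 0, and every a_L with a_L ≥ −γ(v_L): k_s − k_d ≥ A·κ(D_st − D_sf) + (B − κ̄)·v + (κ̄ − B + A)·v_L − (1 − C)·γ(v_L). (Intermediate inequality in the proof of Theorem 4.) -/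
/-- Intermediate inequality in the proof of Theorem 4: on the time-to-conflict
boundary, within the distance-safe set and with `a_L ≥ −γ(v_L)`, the difference
`k_s − k_d` between the extended safe input and the CCC controller is bounded
from below. -/
theorem kskd_ttc_lower_bound
    (p : ℝ → ℝ) (hp : ∀ v, 0 ≤ p v)
    (κ vmax A B C Tc Dst Dsf κbar : ℝ) (γ αe : ℝ → ℝ)
    (hκ : 0 < κ) (hvmax : 0 < vmax)
    (hA : 0 ≤ A) (hB : 0 ≤ B) (hC : 0 ≤ C) (hC1 : C ≤ 1)
    (hTc : 0 < Tc) (hκbar : κbar = 1 / Tc) (hκκbar : κ ≤ κbar)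
    (hγ : ClassK γ) (hαe : αe 0 = 0)
    (D v vL aL : ℝ)
    (hvL : 0 ≤ vL) (hD : D - Dsf ≥ 0)
    (hboundary : (D - Dsf) / Tc + vL - v = 0)
    (haL : aL ≥ -γ vL) :
    (κbar * (vL - v) + p v + αe (κbar * (D - Dsf) + vL - v) + aL) -
      (A * (rangePolicy κ Dst vmax D - v) + B * (speedPolicy vmax vL - v)
        + C * aL) ≥
    A * κ * (Dst - Dsf) + (B - κbar) * v + (κbar - B + A) * vL
      - (1 - C) * γ vL := by
  have hTc' := hTc.ne'
  have hv : v = vL + κbar * (D - Dsf) := by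
    subst hκbar; field_simp at hboundary ⊢; linarith
  have harg : κbar * (D - Dsf) + vL - v = 0 := by rw [hv]; ring
  rw [harg, hαe]
  have hγ0 : 0 ≤ γ vL := hγ.2.2.2 vL hvL
  have h1 : rangePolicy κ Dst vmax D ≤ κ * (D - Dst) := min_le_left _ _
  have h2 : speedPolicy vmax vL ≤ vL := min_le_left _ _
  have h3 : (1 - C) * aL ≥ -((1 - C) * γ vL) := by nlinarith
  have h4 : A * rangePolicy κ Dst vmax D ≤ A * (κ * (D - Dst)) :=
    mul_le_mul_of_nonneg_left h1 hA
  have h5 : B * speedPolicy vmax vL ≤ B * vL := mul_le_mul_of_nonneg_left h2 hB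
  have h6 : A * (κbar - κ) * (D - Dsf) ≥ 0 := mul_nonneg (mul_nonneg hA (by linarith)) hD
  nlinarith [hp v]
end

section
/- Let T_c > 0 and let α_e : ℝ → ℝ be locally Lipschitz and of extended class-K∞. Let D, v, v_L : [0,∞) → ℝ be continuously differentiable functions such that Ḋ(t) = v_L(t) − v(t) for all t ≥ 0, and define h_D(t) = D(t) − D_sf and h_TTC(t) = (D(t) − D_sf)/T_c + v_L(t) − v(t). Assume h_TTC is differentiable with d/dt h_TTC(t) ≥ −α_e(h_TTC(t)) for all t ≥ 0, and that h_D(0) ≥ 0 and h_TTC(0) ≥ 0. Then h_D(t) ≥ 0 and h_TTC(t) ≥ 0 for all t ≥ 0. (This is the Proposition: any controller enforcing the extended CBF condition for the time-to-conflict measure keeps the car-following system safe with respect to S_D ∩ S_TTC, since h_TTC(t) ≥ 0 gives d/dt h_D(t) = v_L − v ≥ −h_D(t)/T_c.) -/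
/-- A function `α : ℝ → ℝ` is of extended class-K∞ if it is continuous, strictly
increasing, `α 0 = 0` and `α(r) → ±∞` as `r → ±∞`. -/
def ExtClassKInf (α : ℝ → ℝ) : Prop :=
  Continuous α ∧ StrictMono α ∧ α 0 = 0 ∧
    Filter.Tendsto α Filter.atTop Filter.atTop ∧
    Filter.Tendsto α Filter.atBot Filter.atBot

lemma nonneg_of_deriv_nonneg_on_nonpos (f f' : ℝ → ℝ)
    (hf : ∀ t ≥ (0:ℝ), HasDerivAt f (f' t) t)
    (h0 : 0 ≤ f 0) (hkey : ∀ t ≥ (0:ℝ), f t ≤ 0 → 0 ≤ f' t) :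
    ∀ t ≥ (0:ℝ), 0 ≤ f t := by
  intro t₀ ht₀
  by_contra hneg
  push_neg at hneg
  set S : Set ℝ := Set.Icc 0 t₀ ∩ f ⁻¹' (Set.Ici 0) with hS
  have h0S : (0:ℝ) ∈ S := ⟨⟨le_refl 0, ht₀⟩, h0⟩
  have hbdd : BddAbove S := ⟨t₀, fun x hx => hx.1.2⟩
  have hcont : ContinuousOn f (Set.Icc 0 t₀) := fun x hx =>
    ((hf x hx.1).continuousAt).continuousWithinAt
  have hSclosed : IsClosed S :=
    hcont.preimage_isClosed_of_isClosed isClosed_Icc isClosed_Ici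
  set s := sSup S with hs_def
  have hsS : s ∈ S := hSclosed.csSup_mem ⟨0, h0S⟩ hbdd
  have hs0 : 0 ≤ s := hsS.1.1
  have hfs : 0 ≤ f s := hsS.2
  have hst₀ : s < t₀ := lt_of_le_of_ne hsS.1.2 (by
    intro h; rw [h] at hfs; exact absurd hfs (not_le.mpr hneg))
  have hIoo : ∀ x ∈ Set.Ioo s t₀, f x < 0 := by
    intro x hx
    by_contra hfx
    push_neg at hfx
    have hxS : x ∈ S := ⟨⟨le_trans hs0 hx.1.le, hx.2.le⟩, hfx⟩
    exact absurd (le_csSup hbdd hxS) (not_le.mpr hx.1)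
  have hsub : Set.Icc s t₀ ⊆ Set.Icc 0 t₀ := Set.Icc_subset_Icc hs0 le_rfl
  have hmono : MonotoneOn f (Set.Icc s t₀) := by
    apply monotoneOn_of_deriv_nonneg (convex_Icc s t₀) (hcont.mono hsub)
    · intro x hx
      rw [interior_Icc] at hx
      exact ((hf x (le_trans hs0 hx.1.le)).differentiableAt).differentiableWithinAt
    · intro x hx
      rw [interior_Icc] at hx
      rw [(hf x (le_trans hs0 hx.1.le)).deriv]
      exact hkey x (le_trans hs0 hx.1.le) (hIoo x hx).le
  have : f s ≤ f t₀ :=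
    hmono ⟨le_refl s, hst₀.le⟩ ⟨hst₀.le, le_refl t₀⟩ hst₀.le
  linarith

/-- Proposition: if the extended CBF condition
`d/dt h_TTC(t) ≥ −α_e(h_TTC(t))` holds along a trajectory of the car-following
system and initially `h_D(0) ≥ 0`, `h_TTC(0) ≥ 0`, then `h_D(t) ≥ 0` and
`h_TTC(t) ≥ 0` for all `t ≥ 0`. -/
theorem safety_distance_and_ttc
    (Tc Dsf : ℝ) (hTc : 0 < Tc)
    (αe : ℝ → ℝ) (hαe_lip : LocallyLipschitz αe) (hαe : ExtClassKInf αe)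
    (D v vL dv dvL dTTC : ℝ → ℝ)
    (hD' : ∀ t ≥ (0 : ℝ), HasDerivAt D (vL t - v t) t)
    (hv' : ∀ t ≥ (0 : ℝ), HasDerivAt v (dv t) t)
    (hvL' : ∀ t ≥ (0 : ℝ), HasDerivAt vL (dvL t) t)
    (hv_cont : Continuous dv) (hvL_cont : Continuous dvL)
    (hTTC' : ∀ t ≥ (0 : ℝ),
      HasDerivAt (fun s => (D s - Dsf) / Tc + vL s - v s) (dTTC t) t)
    (hCBF : ∀ t ≥ (0 : ℝ), dTTC t ≥ -αe ((D t - Dsf) / Tc + vL t - v t))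
    (hD0 : D 0 - Dsf ≥ 0)
    (hTTC0 : (D 0 - Dsf) / Tc + vL 0 - v 0 ≥ 0) :
    ∀ t ≥ (0 : ℝ),
      D t - Dsf ≥ 0 ∧ (D t - Dsf) / Tc + vL t - v t ≥ 0 := by
  obtain ⟨hα_cont, hα_mono, hα0, -, -⟩ := hαe
  have hTTC_nonneg : ∀ t ≥ (0:ℝ), 0 ≤ (D t - Dsf) / Tc + vL t - v t := by
    apply nonneg_of_deriv_nonneg_on_nonpos _ dTTC hTTC' hTTC0
    intro t ht hle
    have : αe ((D t - Dsf) / Tc + vL t - v t) ≤ αe 0 := hα_mono.monotone hle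
    rw [hα0] at this
    linarith [hCBF t ht]
  have hD_nonneg : ∀ t ≥ (0:ℝ), 0 ≤ D t - Dsf := by
    apply nonneg_of_deriv_nonneg_on_nonpos _ (fun t => vL t - v t) _ hD0
    · intro t ht hle
      have h1 := hTTC_nonneg t ht
      have h2 : (D t - Dsf) / Tc ≤ 0 := div_nonpos_of_nonpos_of_nonneg hle hTc.le
      linarith
    · intro t ht
      exact (hD' t ht).sub_const Dsf
  intro t ht
  exact ⟨hD_nonneg t ht, hTTC_nonneg t ht⟩
end

section
/- Let m be a positive natural number, and let a ∈ ℝ, b ∈ EuclideanSpace ℝ (Fin m) with b ≠ 0, and k_d ∈ EuclideanSpace ℝ (Fin m). Set η = −a − ⟨b, k_d⟩ and u* = k_d + max{0, η}·b/‖b‖². Then u* satisfies the constraint a + ⟨b, u*⟩ ≥ 0, and u* is the unique minimizer of ‖u − k_d‖² over the set {u ∈ ℝ^m : a + ⟨b, u⟩ ≥ 0}. (Closed-form solution of the CBF quadratic-program safety filter: with a = L_f h(x) + α(h(x)) and b = L_g h(x)ᵀ, the minimizer of ‖u − k_d(x)‖² subject to ḣ(x, u) ≥ −α(h(x)) is k(x)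 = k_d(x) + max{0, η(x)}·L_g h(x)ᵀ/‖L_g h(x)‖² with η(x) = −L_f h(x) − L_g h(x)·k_d(x) − α(h(x)).) -/
open scoped RealInnerProductSpace

/-- Closed-form solution of the CBF quadratic-program safety filter: with
`η = −a − ⟨b, k_d⟩` and `u* = k_d + max{0, η}·b/‖b‖²`, the point `u*` satisfies
the constraint `a + ⟨b, u*⟩ ≥ 0` and is the unique minimizer of `‖u − k_d‖²`
over `{u : a + ⟨b, u⟩ ≥ 0}`. -/
theorem cbf_qp_closed_form
    (m : ℕ) (hm : 0 < m) (a : ℝ)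
    (b kd : EuclideanSpace ℝ (Fin m)) (hb : b ≠ 0)
    (η : ℝ) (hη : η = -a - ⟪b, kd⟫)
    (ustar : EuclideanSpace ℝ (Fin m))
    (hustar : ustar = kd + (max 0 η / ‖b‖ ^ 2) • b) :
    a + ⟪b, ustar⟫ ≥ 0 ∧
    (∀ u : EuclideanSpace ℝ (Fin m), a + ⟪b, u⟫ ≥ 0 →
      ‖ustar - kd‖ ^ 2 ≤ ‖u - kd‖ ^ 2) ∧
    (∀ u : EuclideanSpace ℝ (Fin m), a + ⟪b, u⟫ ≥ 0 → u ≠ ustar →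
      ‖ustar - kd‖ ^ 2 < ‖u - kd‖ ^ 2) := by
  have hbn : (0:ℝ) < ‖b‖ := norm_pos_iff.mpr hb
  have hb2 : (0:ℝ) < ‖b‖ ^ 2 := by positivity
  have hM : (0:ℝ) ≤ max 0 η := le_max_left 0 η
  -- ustar - kd
  have hdiff : ustar - kd = (max 0 η / ‖b‖ ^ 2) • b := by
    rw [hustar]; abel
  have hinner : ⟪b, ustar⟫ = ⟪b, kd⟫ + max 0 η := by
    rw [hustar, inner_add_right, real_inner_smul_right, real_inner_self_eq_norm_sq]
    field_simp
  have hnormstar : ‖ustar - kd‖ ^ 2 = (max 0 η) ^ 2 / ‖b‖ ^ 2 := by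
    rw [hdiff, norm_smul, mul_pow, Real.norm_eq_abs, sq_abs, div_pow]
    field_simp
  -- key bound for feasible u
  have key : ∀ u : EuclideanSpace ℝ (Fin m), a + ⟪b, u⟫ ≥ 0 →
      (max 0 η) ≤ ‖b‖ * ‖u - kd‖ := by
    intro u hu
    have h1 : η ≤ ⟪b, u - kd⟫ := by
      rw [hη, inner_sub_right]; linarith
    have h2 : ⟪b, u - kd⟫ ≤ ‖b‖ * ‖u - kd‖ := real_inner_le_norm _ _
    have h3 : (0:ℝ) ≤ ‖b‖ * ‖u - kd‖ := by positivity
    exact max_le h3 (h1.trans h2)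
  refine ⟨?_, ?_, ?_⟩
  · rw [hinner]
    have := le_max_right 0 η
    rw [hη] at this
    linarith [le_max_right 0 η]
  · intro u hu
    have := key u hu
    rw [hnormstar]
    rw [div_le_iff₀ hb2]
    calc (max 0 η) ^ 2 ≤ (‖b‖ * ‖u - kd‖) ^ 2 := by
          exact pow_le_pow_left₀ hM this 2
      _ = ‖u - kd‖ ^ 2 * ‖b‖ ^ 2 := by ring
  · intro u hu hne
    by_contra hle
    push_neg at hle
    have hge : ‖ustar - kd‖ ^ 2 ≤ ‖u - kd‖ ^ 2 := by
      have := key u hu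
      rw [hnormstar, div_le_iff₀ hb2]
      calc (max 0 η) ^ 2 ≤ (‖b‖ * ‖u - kd‖) ^ 2 := pow_le_pow_left₀ hM this 2
        _ = ‖u - kd‖ ^ 2 * ‖b‖ ^ 2 := by ring
    have heq : ‖u - kd‖ ^ 2 = ‖ustar - kd‖ ^ 2 := le_antisymm hle hge
    have hnorm_eq : ‖u - kd‖ = ‖ustar - kd‖ := by
      rw [← Real.sqrt_sq (norm_nonneg (u - kd)), ← Real.sqrt_sq (norm_nonneg (ustar - kd)), heq]
    -- ‖u - kd‖ = max0η/‖b‖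
    have hval : ‖u - kd‖ = max 0 η / ‖b‖ := by
      have : ‖ustar - kd‖ = max 0 η / ‖b‖ := by
        rw [hdiff, norm_smul, Real.norm_eq_abs, abs_of_nonneg (by positivity)]
        field_simp
      rw [hnorm_eq, this]
    -- equality in Cauchy-Schwarz
    have h1 : η ≤ ⟪b, u - kd⟫ := by
      rw [hη, inner_sub_right]; linarith
    have hCS : ⟪b, u - kd⟫ ≤ ‖b‖ * ‖u - kd‖ := real_inner_le_norm _ _
    have hprod : ‖b‖ * ‖u - kd‖ = max 0 η := by
      rw [hval]; field_simp
    have hinner_eq : ⟪b, u - kd⟫ = ‖b‖ * ‖u - kd‖ := by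
      rcases le_or_gt η 0 with h | h
      · have hM0 : max 0 η = 0 := max_eq_left h
        have : ‖u - kd‖ = 0 := by rw [hval, hM0]; simp
        have huk : u - kd = 0 := norm_eq_zero.mp this
        rw [huk]; simp
      · have hM0 : max 0 η = η := max_eq_right h.le
        have : ⟪b, u - kd⟫ ≥ η := h1
        rw [hprod, hM0]
        linarith [hprod, hM0]
    have := inner_eq_norm_mul_iff_real.mp hinner_eq
    -- ‖u-kd‖ • b = ‖b‖ • (u - kd)
    apply hne
    have huk : u - kd = (‖u - kd‖ / ‖b‖) • b := by
      have h2 : (‖b‖)⁻¹ • (‖u - kd‖ • b) = (‖b‖)⁻¹ • (‖b‖ • (u - kd)) := by rw [this]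
      rw [smul_smul, smul_smul, inv_mul_cancel₀ hbn.ne', one_smul] at h2
      rw [div_eq_inv_mul]; exact h2.symm
    have : u = kd + (‖u - kd‖ / ‖b‖) • b := by
      rw [← huk]; abel
    rw [this, hustar, hval]
    congr 1
    rw [div_div, ← sq]
  done
end

section
/- Let p : ℝ → ℝ, T_H > 0, κ̄ = 1/T_H, and let α : ℝ → ℝ be locally Lipschitz and of extended class-K∞. Let k_d : ℝ³ → ℝ be any (desired) controller and define the safe input k_s(D, v, v_L) = κ̄(v_L − v) + p(v) + α(κ̄(D − D_sf) − v). Let a_L : [0,∞) → ℝ be continuous and let (D, v, v_L) : [0,∞) → ℝ³ be continuously differentiable and satisfy the closed-loop dynamics Ḋ(t) = v_L(t) − v(t), v̇(t) = u(t) − p(v(t)), v̇_L(t) = a_L(t) with the filtered input u(t) = min{k_d(D(t), v(t), v_L(t)), k_s(D(t), v(t), v_L(t))}. If h_TH(0) = (D(0) − D_sf)/T_H − v(0) ≥ 0, then h_TH(t) = (D(t) − D_sf)/T_H − v(t) ≥ 0 for all t ≥ 0. (The CBF safety filter k = min{k_d, k_s} renders the car-following system safe with respect to the time-headway safe set, for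 any desired controller k_d.) -/
/-- The CBF safety filter `u = min{k_d, k_s}` with safe input
`k_s = κ̄(v_L − v) + p(v) + α(κ̄(D − D_sf) − v)` renders the car-following
system safe with respect to the time-headway safe set `h_TH ≥ 0`, for any
desired controller `k_d`. -/
theorem safety_filter_time_headway
    (p : ℝ → ℝ) (TH Dsf κbar : ℝ) (hTH : 0 < TH) (hκbar : κbar = 1 / TH)
    (α : ℝ → ℝ) (hα_lip : LocallyLipschitz α) (hα : ExtClassKInf α)
    (kd : ℝ → ℝ → ℝ → ℝ) (ks : ℝ → ℝ → ℝ → ℝ)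
    (hks : ∀ D v vL, ks D v vL =
      κbar * (vL - v) + p v + α (κbar * (D - Dsf) - v))
    (aL : ℝ → ℝ) (haL : Continuous aL)
    (D v vL u : ℝ → ℝ)
    (hu : ∀ t ≥ (0 : ℝ),
      u t = min (kd (D t) (v t) (vL t)) (ks (D t) (v t) (vL t)))
    (hD' : ∀ t ≥ (0 : ℝ), HasDerivAt D (vL t - v t) t)
    (hv' : ∀ t ≥ (0 : ℝ), HasDerivAt v (u t - p (v t)) t)
    (hvL' : ∀ t ≥ (0 : ℝ), HasDerivAt vL (aL t) t)
    (hv_cont : Continuous fun t => u t - p (v t))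
    (h0 : (D 0 - Dsf) / TH - v 0 ≥ 0) :
    ∀ t ≥ (0 : ℝ), (D t - Dsf) / TH - v t ≥ 0 := by
  intro t₁ ht₁
  by_contra hneg
  push_neg at hneg
  set h : ℝ → ℝ := fun t => (D t - Dsf) / TH - v t with hh
  have hd : ∀ t ≥ (0 : ℝ), HasDerivAt h ((vL t - v t) / TH - (u t - p (v t))) t := by
    intro t ht
    exact (((hD' t ht).sub_const Dsf).div_const TH).sub (hv' t ht)
  have hcont : ContinuousOn h (Set.Ici 0) := fun t ht =>
    ((hd t ht).continuousAt).continuousWithinAt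
  have hg : Continuous (fun t => h (max t 0)) :=
    hcont.comp_continuous (continuous_id.max continuous_const)
      (fun x => Set.mem_Ici.mpr (le_max_right _ _))
  set S : Set ℝ := Set.Icc (0 : ℝ) t₁ ∩ {t | 0 ≤ h (max t 0)} with hS
  have hSclosed : IsClosed S :=
    isClosed_Icc.inter (isClosed_le continuous_const hg)
  have h0mem : (0 : ℝ) ∈ S := by
    refine ⟨⟨le_refl _, ht₁⟩, ?_⟩
    simp only [Set.mem_setOf_eq, max_self]
    exact h0
  have hSbdd : BddAbove S := ⟨t₁, fun x hx => hx.1.2⟩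
  set s := sSup S with hs
  have hsmem : s ∈ S := hSclosed.csSup_mem ⟨0, h0mem⟩ hSbdd
  have hs0 : (0 : ℝ) ≤ s := hsmem.1.1
  have hst₁ : s ≤ t₁ := hsmem.1.2
  have hhs : 0 ≤ h s := by
    have h2 := hsmem.2
    simpa [max_eq_left hs0] using h2
  have hslt : s < t₁ := by
    rcases lt_or_eq_of_le hst₁ with h' | h'
    · exact h'
    · exfalso; rw [h'] at hhs; exact absurd hhs (not_le.mpr hneg)
  -- on (s, t₁], h is negative
  have hIoc : ∀ x ∈ Set.Ioc s t₁, h x < 0 := by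
    intro x hx
    by_contra hxpos
    push_neg at hxpos
    have hxmem : x ∈ S := by
      refine ⟨⟨le_trans hs0 hx.1.le, hx.2⟩, ?_⟩
      simpa [max_eq_left (le_trans hs0 hx.1.le)] using hxpos
    exact absurd (le_csSup hSbdd hxmem) (not_le.mpr hx.1)
  -- h is strictly monotone on [s, t₁]
  have hmono : StrictMonoOn h (Set.Icc s t₁) := by
    apply strictMonoOn_of_deriv_pos (convex_Icc s t₁)
    · exact hcont.mono (fun x hx => le_trans hs0 hx.1)
    · intro x hx
      rw [interior_Icc] at hx
      have hx0 : (0 : ℝ) ≤ x := le_trans hs0 hx.1.le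
      have hder := hd x hx0
      rw [hder.deriv]
      have hxneg : h x < 0 := hIoc x ⟨hx.1, hx.2.le⟩
      have hαneg : α (h x) < 0 := by
        have := hα.2.1 hxneg
        rwa [hα.2.2.1] at this
      have hule : u x ≤ ks (D x) (v x) (vL x) := by
        rw [hu x hx0]; exact min_le_right _ _
      rw [hks] at hule
      have heq : κbar * (D x - Dsf) - v x = h x := by
        rw [hκbar, hh]; ring
      rw [heq] at hule
      have heq2 : (vL x - v x) / TH = κbar * (vL x - v x) := by
        rw [hκbar]; ring
      rw [heq2]
      nlinarith
  have := hmono ⟨le_refl s, hst₁⟩ ⟨hst₁, le_refl t₁⟩ hslt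
  have ht₁neg : h t₁ < 0 := hneg
  linarith
end

section
/- Let α, α_e : ℝ → ℝ be locally Lipschitz functions of extended class-K∞. Let φ : [0,∞) → ℝ be continuously differentiable and define η(t) = φ'(t) + α(φ(t)). Assume η is differentiable with η'(t) ≥ −α_e(η(t)) for all t ≥ 0, and that φ(0) ≥ 0 and η(0) ≥ 0. Then φ(t) ≥ 0 and η(t) ≥ 0 for all t ≥ 0. (Trajectory-wise content of Corollary 1: if the extended CBF h_e = L_f h + α(h) satisfies the CBF inequality along a closed-loop trajectory and the trajectory starts in S ∩ S_e, then it remains in S ∩ S_e.) -/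
lemma aux_nonneg (β : ℝ → ℝ) (hm : StrictMono β) (h0 : β 0 = 0)
    (f df : ℝ → ℝ) (hf : ∀ t ≥ (0 : ℝ), HasDerivAt f (df t) t)
    (hdf : ∀ t ≥ (0 : ℝ), df t ≥ -β (f t)) (hf0 : 0 ≤ f 0) :
    ∀ t ≥ (0 : ℝ), 0 ≤ f t := by
  intro t1 ht1
  by_contra hneg
  push_neg at hneg
  have hcontOn : ContinuousOn f (Set.Icc 0 t1) := fun x hx =>
    ((hf x hx.1).continuousAt).continuousWithinAt
  set S := Set.Icc (0 : ℝ) t1 ∩ f ⁻¹' Set.Ici 0 with hSdef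
  have hSclosed : IsClosed S :=
    hcontOn.preimage_isClosed_of_isClosed isClosed_Icc isClosed_Ici
  have hScomp : IsCompact S :=
    isCompact_Icc.of_isClosed_subset hSclosed Set.inter_subset_left
  have h0S : (0 : ℝ) ∈ S := ⟨⟨le_refl 0, ht1⟩, hf0⟩
  set t0 := sSup S with ht0def
  have ht0S : t0 ∈ S := hScomp.sSup_mem ⟨0, h0S⟩
  have ht00 : 0 ≤ t0 := ht0S.1.1
  have ht0t1 : t0 ≤ t1 := ht0S.1.2
  have hft0 : 0 ≤ f t0 := ht0S.2
  have ht0lt : t0 < t1 := by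
    rcases lt_or_eq_of_le ht0t1 with h | h
    · exact h
    · exact absurd (h ▸ hft0) (not_le.mpr hneg)
  have hlt : ∀ x ∈ Set.Ioo t0 t1, f x < 0 := by
    intro x hx
    by_contra h
    push_neg at h
    have hxS : x ∈ S := ⟨⟨le_trans ht00 hx.1.le, hx.2.le⟩, h⟩
    exact absurd (le_csSup hScomp.bddAbove hxS) (not_le.mpr hx.1)
  have hmono : MonotoneOn f (Set.Icc t0 t1) := by
    apply monotoneOn_of_deriv_nonneg (convex_Icc t0 t1)
      (hcontOn.mono (Set.Icc_subset_Icc_left ht00))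
    · intro x hx
      rw [interior_Icc] at hx
      exact ((hf x (le_trans ht00 hx.1.le)).differentiableAt).differentiableWithinAt
    · intro x hx
      rw [interior_Icc] at hx
      have hx0 : (0 : ℝ) ≤ x := le_trans ht00 hx.1.le
      have := (hf x hx0).deriv
      rw [this]
      have hβ : β (f x) < 0 := h0 ▸ hm (hlt x hx)
      linarith [hdf x hx0]
  have := hmono ⟨le_refl t0, ht0t1⟩ ⟨ht0t1, le_refl t1⟩ ht0t1
  linarith

/-- Trajectory-wise content of Corollary 1: if `φ` is continuously
differentiable, `η(t) = φ'(t) + α(φ(t))` satisfies `η'(t) ≥ −α_e(η(t))`, and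
`φ(0) ≥ 0`, `η(0) ≥ 0`, then `φ(t) ≥ 0` and `η(t) ≥ 0` for all `t ≥ 0`. -/
theorem extended_cbf_trajectory_safety
    (α αe : ℝ → ℝ)
    (hα_lip : LocallyLipschitz α) (hαe_lip : LocallyLipschitz αe)
    (hα : ExtClassKInf α) (hαe : ExtClassKInf αe)
    (φ dφ η dη : ℝ → ℝ)
    (hφ' : ∀ t ≥ (0 : ℝ), HasDerivAt φ (dφ t) t)
    (hdφ_cont : Continuous dφ)
    (hη : ∀ t ≥ (0 : ℝ), η t = dφ t + α (φ t))
    (hη' : ∀ t ≥ (0 : ℝ), HasDerivAt η (dη t) t)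
    (hCBF : ∀ t ≥ (0 : ℝ), dη t ≥ -αe (η t))
    (hφ0 : φ 0 ≥ 0) (hη0 : η 0 ≥ 0) :
    ∀ t ≥ (0 : ℝ), φ t ≥ 0 ∧ η t ≥ 0 := by
  obtain ⟨_, hαm, hα0, _, _⟩ := hα
  obtain ⟨_, hαem, hαe0, _, _⟩ := hαe
  have hηnn : ∀ t ≥ (0 : ℝ), 0 ≤ η t :=
    aux_nonneg αe hαem hαe0 η dη hη' hCBF hη0
  have hφnn : ∀ t ≥ (0 : ℝ), 0 ≤ φ t := by
    refine aux_nonneg α hαm hα0 φ dφ hφ' (fun t ht => ?_) hφ0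
    have h1 := hη t ht
    have h2 := hηnn t ht
    linarith
  exact fun t ht => ⟨hφnn t ht, hηnn t ht⟩
end

section
/- Let α : ℝ → ℝ be locally Lipschitz and of extended class-K∞, and let h : [0,∞) → ℝ be differentiable with h'(t) ≥ −α(h(t)) for all t ≥ 0. If h(0) ≥ 0, then h(t) ≥ 0 for all t ≥ 0. (Trajectory-wise comparison principle underlying Theorem 2: a controller satisfying the CBF inequality ḣ(x, k(x)) ≥ −α(h(x)) along the closed-loop solution renders the system safe with respect to the set S = {x : h(x) ≥ 0}.) -/
/-- Trajectory-wise comparison principle underlying Theorem 2: if `h` is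
differentiable on `[0,∞)` with `h'(t) ≥ −α(h(t))` for a locally Lipschitz
extended class-K∞ function `α`, and `h(0) ≥ 0`, then `h(t) ≥ 0` for all
`t ≥ 0`. -/
theorem cbf_comparison_safety
    (α : ℝ → ℝ) (hα_lip : LocallyLipschitz α) (hα : ExtClassKInf α)
    (h dh : ℝ → ℝ)
    (hd : ∀ t ≥ (0 : ℝ), HasDerivWithinAt h (dh t) (Set.Ici 0) t)
    (hCBF : ∀ t ≥ (0 : ℝ), dh t ≥ -α (h t))
    (h0 : h 0 ≥ 0) :
    ∀ t ≥ (0 : ℝ), h t ≥ 0 := by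
  obtain ⟨-, hmono, hzero, -, -⟩ := hα
  by_contra hc
  push_neg at hc
  obtain ⟨t₁, ht₁0, ht₁⟩ := hc
  -- h is continuous on [0,∞)
  have hcont : ContinuousOn h (Set.Ici 0) := fun t ht =>
    (hd t ht).continuousWithinAt
  -- the set of times ≤ t₁ where h ≥ 0
  set S : Set ℝ := Set.Icc 0 t₁ ∩ h ⁻¹' Set.Ici 0 with hS
  have ht₁pos : (0 : ℝ) < t₁ := by
    rcases eq_or_lt_of_le ht₁0 with heq | hlt
    · exfalso; rw [← heq] at ht₁; linarith
    · exact hlt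
  have hSne : S.Nonempty := ⟨0, ⟨le_refl 0, le_of_lt ht₁pos⟩, h0⟩
  have hSclosed : IsClosed S :=
    (hcont.mono (by intro x hx; exact hx.1)).preimage_isClosed_of_isClosed
      isClosed_Icc isClosed_Ici
  have hScompact : IsCompact S :=
    isCompact_Icc.of_isClosed_subset hSclosed Set.inter_subset_left
  set t₀ := sSup S with ht₀def
  have ht₀mem : t₀ ∈ S := hScompact.sSup_mem hSne
  have hbdd : BddAbove S := hScompact.bddAbove
  have ht₀0 : (0 : ℝ) ≤ t₀ := ht₀mem.1.1
  have ht₀le : t₀ ≤ t₁ := ht₀mem.1.2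
  have hht₀ : 0 ≤ h t₀ := ht₀mem.2
  have ht₀lt : t₀ < t₁ := by
    rcases eq_or_lt_of_le ht₀le with heq | hlt
    · exfalso; rw [heq] at hht₀; linarith
    · exact hlt
  -- on (t₀, t₁], h is negative
  have hneg : ∀ t ∈ Set.Ioc t₀ t₁, h t < 0 := by
    intro t ⟨htl, htr⟩
    by_contra hge
    push_neg at hge
    have : t ∈ S := ⟨⟨le_trans ht₀0 (le_of_lt htl), htr⟩, hge⟩
    exact absurd (le_csSup hbdd this) (not_le.mpr htl)
  -- derivative positive on (t₀, t₁)
  have hderiv : ∀ t ∈ Set.Ioo t₀ t₁, 0 < deriv h t := by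
    intro t ⟨htl, htr⟩
    have htpos : (0 : ℝ) < t := lt_of_le_of_lt ht₀0 htl
    have hda : HasDerivAt h (dh t) t :=
      (hd t (le_of_lt htpos)).hasDerivAt (Ici_mem_nhds htpos)
    rw [hda.deriv]
    have hhtneg : h t < 0 := hneg t ⟨htl, le_of_lt htr⟩
    have : α (h t) < α 0 := hmono hhtneg
    rw [hzero] at this
    have := hCBF t (le_of_lt htpos)
    linarith
  have hcontIcc : ContinuousOn h (Set.Icc t₀ t₁) :=
    hcont.mono (fun x hx => le_trans ht₀0 hx.1)
  have hsm : StrictMonoOn h (Set.Icc t₀ t₁) := by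
    apply strictMonoOn_of_deriv_pos (convex_Icc t₀ t₁) hcontIcc
    intro t ht
    rw [interior_Icc] at ht
    exact hderiv t ht
  have : h t₀ < h t₁ :=
    hsm ⟨le_refl t₀, ht₀le⟩ ⟨ht₀le, le_refl t₁⟩ ht₀lt
  linarith
end
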